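/- Let Γ be a 1-differential poset and φ a non-negative normalized harmonic function on Γ. For 0 ≤ τ ≤ 1 define C_τ(φ)(v) = Σ_{k=0}^{n} (τ^k (1−τ)^{n−k} / (n−k)!) Σ_{|u|=k} φ(u) d(u,v), where n = |v|. Then C_τ(φ) is a non-negative normalized harmonic function on Γ. -/

import Mathlib

/-- A branching diagram: a graded graph with finite levels, a unique minimal
vertex `bot` of rank `0`, no maximal vertices, and every vertex of positive
rank covering some vertex. `covers u w` means `w` covers `u` (`u ⋖ w`). -/
structure BranchingDiagram where
  V : Type
  rank : V → ℕ
  covers : V → V → Prop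
  rank_covers : ∀ u w, covers u w → rank w = rank u + 1
  finite_level : ∀ n : ℕ, {v : V | rank v = n}.Finite
  bot : V
  rank_bot : rank bot = 0
  bot_unique : ∀ v, rank v = 0 → v = bot
  no_max : ∀ v, ∃ w, covers v w
  exists_pred : ∀ v, rank v ≠ 0 → ∃ u, covers u v

/-- `Γ.d u w` is the number of saturated chains (paths along covering relations)
from `u` to `w`. -/
noncomputable def BranchingDiagram.d (Γ : BranchingDiagram) (u w : Γ.V) : ℕ :=
  Set.ncard {p : List Γ.V | p.Chain' Γ.covers ∧ p.head? = some u ∧ p.getLast? = some w}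

/-- A `1`-differential poset: (D1) for distinct vertices of equal rank, the number
of common lower covers equals the number of common upper covers; (D2) each vertex
is covered by one more vertex than it covers. -/
def BranchingDiagram.IsDifferential (Γ : BranchingDiagram) : Prop :=
  (∀ u v : Γ.V, u ≠ v → Γ.rank u = Γ.rank v →
      Set.ncard {x | Γ.covers x u ∧ Γ.covers x v} =
        Set.ncard {w | Γ.covers u w ∧ Γ.covers v w}) ∧
  (∀ v : Γ.V, Set.ncard {w | Γ.covers v w} = Set.ncard {u | Γ.covers u v} + 1)

/-- The contraction `C_τ(φ)(v) = Σ_{k=0}^{n} (τ^k (1−τ)^{n−k}/(n−k)!) Σ_{|u|=k} φ(u) d(u,v)`,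
where `n = |v|`. -/
noncomputable def BranchingDiagram.contract (Γ : BranchingDiagram) (τ : ℝ)
    (φ : Γ.V → ℝ) : Γ.V → ℝ := fun v =>
  ∑ k ∈ Finset.range (Γ.rank v + 1),
    τ ^ k * (1 - τ) ^ (Γ.rank v - k) / (Γ.rank v - k).factorial *
      ∑ᶠ u ∈ {u : Γ.V | Γ.rank u = k}, φ u * (Γ.d u v : ℝ)

/-! In a `1`-differential poset the up and down operators satisfy `DU = UD + I`; by induction on
`|v|` this gives `Σ_{v⋖w} d(u,w) = Σ_{x⋖u} d(x,v) + (|v| + 1 - |u|) d(u,v)`. Pairing with a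
harmonic `φ` turns it into `Σ_{v⋖w} S_k(w,φ) = S_{k-1}(v,φ) + (|v| + 1 - k) S_k(v,φ)`, and the
weights `c_n(k) = τ^k (1-τ)^(n-k) / (n-k)!` of `C_τ` satisfy
`c_{n+1}(k+1) + (n+1-k) c_{n+1}(k) = c_n(k)` because `τ + (1 - τ) = 1`, so `C_τ(φ)` is again
harmonic. -/

open Finset

namespace BranchingDiagram

variable (Γ : BranchingDiagram)

theorem finite_setOf_covers_left (w : Γ.V) : {y | Γ.covers y w}.Finite :=
  (Γ.finite_level (Γ.rank w - 1)).subset fun y hy => by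
    have := Γ.rank_covers y w hy
    show Γ.rank y = _
    omega

theorem finite_setOf_covers_right (v : Γ.V) : {w | Γ.covers v w}.Finite :=
  (Γ.finite_level (Γ.rank v + 1)).subset fun w hw => Γ.rank_covers v w hw

noncomputable def level (n : ℕ) : Finset Γ.V := (Γ.finite_level n).toFinset

noncomputable def up (v : Γ.V) : Finset Γ.V := (Γ.finite_setOf_covers_right v).toFinset

noncomputable def down (w : Γ.V) : Finset Γ.V := (Γ.finite_setOf_covers_left w).toFinset

variable {Γ}

@[simp]
theorem mem_level {n : ℕ} {v : Γ.V} : v ∈ Γ.level n ↔ Γ.rank v = n :=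
  Set.Finite.mem_toFinset _

@[simp]
theorem mem_up {v w : Γ.V} : w ∈ Γ.up v ↔ Γ.covers v w :=
  Set.Finite.mem_toFinset _

@[simp]
theorem mem_down {w y : Γ.V} : y ∈ Γ.down w ↔ Γ.covers y w :=
  Set.Finite.mem_toFinset _

theorem finsum_mem_covers_right {M : Type*} [AddCommMonoid M] (f : Γ.V → M) (v : Γ.V) :
    ∑ᶠ w ∈ {w | Γ.covers v w}, f w = ∑ w ∈ Γ.up v, f w :=
  finsum_mem_eq_finite_toFinset_sum f _

theorem level_zero : Γ.level 0 = {Γ.bot} := by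
  ext v
  simpa using ⟨Γ.bot_unique v, fun h => h ▸ Γ.rank_bot⟩

theorem down_eq_empty_of_rank_eq_zero {u : Γ.V} (hu : Γ.rank u = 0) : Γ.down u = ∅ :=
  eq_empty_of_forall_notMem fun x hx => by
    have := Γ.rank_covers x u (mem_down.1 hx)
    omega

variable (Γ) in
def chains (u w : Γ.V) : Set (List Γ.V) :=
  {p | p.IsChain Γ.covers ∧ p.head? = some u ∧ p.getLast? = some w}

theorem d_eq_ncard_chains (u w : Γ.V) : Γ.d u w = (Γ.chains u w).ncard := rfl

theorem rank_add_length_of_mem_chains {u w : Γ.V} {p : List Γ.V} (hp : p ∈ Γ.chains u w) :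
    Γ.rank u + p.length = Γ.rank w + 1 := by
  obtain ⟨hc, hu, hw⟩ := hp
  induction hc generalizing u with
  | nil => simp at hu
  | singleton a =>
    obtain rfl : a = u := by simpa using hu
    obtain rfl : a = w := by simpa using hw
    rfl
  | @cons_cons a b l hab _ ih =>
    obtain rfl : a = u := by simpa using hu
    have hb := ih rfl (by simpa using hw)
    have hab := Γ.rank_covers a b hab
    simp only [List.length_cons] at hb ⊢
    omega

theorem mem_chains_of_rank_le {u w : Γ.V} (h : Γ.rank w ≤ Γ.rank u) {p : List Γ.V} :
    p ∈ Γ.chains u w ↔ u = w ∧ p = [u] := by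
  constructor
  · intro hp
    have hlen := rank_add_length_of_mem_chains hp
    have hne : p ≠ [] := by rintro rfl; simp [chains] at hp
    have := List.length_pos_iff.2 hne
    obtain ⟨a, rfl⟩ : ∃ a, p = [a] := List.length_eq_one_iff.1 (by omega)
    obtain ⟨-, hu, hw⟩ := hp
    simp only [List.head?_cons, List.getLast?_singleton, Option.some.injEq] at hu hw
    exact ⟨hu ▸ hw, hu ▸ rfl⟩
  · rintro ⟨rfl, rfl⟩
    exact ⟨.singleton u, rfl, rfl⟩

@[simp]
theorem d_self (u : Γ.V) : Γ.d u u = 1 := by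
  rw [d_eq_ncard_chains, show Γ.chains u u = {[u]} by ext; simp [mem_chains_of_rank_le le_rfl]]
  exact Set.ncard_singleton _

theorem d_eq_zero_of_rank_le {u w : Γ.V} (hne : u ≠ w) (h : Γ.rank w ≤ Γ.rank u) : Γ.d u w = 0 := by
  rw [d_eq_ncard_chains, show Γ.chains u w = ∅ by ext; simp [mem_chains_of_rank_le h, hne]]
  exact Set.ncard_empty _

theorem chains_eq_image_biUnion {u w : Γ.V} (hne : u ≠ w) :
    Γ.chains u w = (· ++ [w]) '' ⋃ y ∈ {y | Γ.covers y w}, Γ.chains u y := by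
  ext p
  simp only [Set.mem_image, Set.mem_iUnion, exists_prop]
  constructor
  · rintro ⟨hc, hu, hw⟩
    obtain rfl | ⟨q, b, rfl⟩ := List.eq_nil_or_concat p
    · simp at hu
    rw [List.concat_eq_append] at hc hu hw ⊢
    obtain rfl : b = w := by simpa using hw
    have hq : q ≠ [] := by
      rintro rfl
      exact hne (by simpa using hu.symm)
    obtain ⟨hcq, -, hlast⟩ := List.isChain_append.1 hc
    refine ⟨q, ⟨q.getLast hq, ?_, hcq, ?_, List.getLast?_eq_some_getLast hq⟩, rfl⟩
    · exact hlast _ (List.getLast?_eq_some_getLast hq) _ rfl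
    · cases q with
      | nil => exact absurd rfl hq
      | cons a q => simpa using hu
  · rintro ⟨q, ⟨y, hy, hcq, hu, hlast⟩, rfl⟩
    refine ⟨hcq.append (.singleton w) ?_, by simp [hu], List.getLast?_concat⟩
    intro x hx z hz
    rw [hlast, Option.mem_some_iff] at hx
    rw [List.head?_cons, Option.mem_some_iff] at hz
    exact hx ▸ hz ▸ hy

theorem finite_chains (u w : Γ.V) : (Γ.chains u w).Finite := by
  induction hn : Γ.rank w using Nat.strong_induction_on generalizing w with
  | _ n ih =>
  by_cases h : Γ.rank w ≤ Γ.rank u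
  · exact (Set.finite_singleton [u]).subset fun p hp => ((mem_chains_of_rank_le h).1 hp).2
  · rw [chains_eq_image_biUnion (by rintro rfl; exact h le_rfl)]
    refine ((Γ.finite_setOf_covers_left w).biUnion fun y hy => ?_).image _
    have := Γ.rank_covers y w hy
    exact ih _ (by omega) y rfl

theorem d_eq_sum_down {u w : Γ.V} (hne : u ≠ w) : Γ.d u w = ∑ y ∈ Γ.down w, Γ.d u y := by
  have hdisj : Set.PairwiseDisjoint {y | Γ.covers y w} (Γ.chains u) := fun y _ y' _ hyy' =>
    Set.disjoint_left.2 fun p hp hp' => hyy' (Option.some_injective _ (hp.2.2.symm.trans hp'.2.2))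
  rw [d_eq_ncard_chains, chains_eq_image_biUnion hne,
    Set.ncard_image_of_injective _ (List.append_left_injective [w]),
    (Γ.finite_setOf_covers_left w).ncard_biUnion (fun y _ => finite_chains u y) hdisj,
    finsum_mem_eq_finite_toFinset_sum]
  rfl

section Differential

open scoped Classical

theorem sum_up_sum_down_eq_sum_level {M : Type*} [AddCommMonoid M] (f : Γ.V → M) (v : Γ.V) :
    ∑ w ∈ Γ.up v, ∑ y ∈ Γ.down w, f y =
      ∑ y ∈ Γ.level (Γ.rank v), #{w ∈ Γ.up v | Γ.covers y w} • f y := by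
  rw [sum_comm' (t' := Γ.level (Γ.rank v)) (s' := fun y => {w ∈ Γ.up v | Γ.covers y w})]
  · simp only [sum_const]
  · intro w y
    simp only [mem_up, mem_down, mem_level, mem_filter]
    constructor
    · rintro ⟨hvw, hyw⟩
      have := Γ.rank_covers v w hvw
      have := Γ.rank_covers y w hyw
      exact ⟨⟨hvw, hyw⟩, by omega⟩
    · exact fun h => h.1

theorem sum_down_sum_up_eq_sum_level {M : Type*} [AddCommMonoid M] (f : Γ.V → M) (v : Γ.V) :
    ∑ x ∈ Γ.down v, ∑ y ∈ Γ.up x, f y =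
      ∑ y ∈ Γ.level (Γ.rank v), #{x ∈ Γ.down v | Γ.covers x y} • f y := by
  rw [sum_comm' (t' := Γ.level (Γ.rank v)) (s' := fun y => {x ∈ Γ.down v | Γ.covers x y})]
  · simp only [sum_const]
  · intro x y
    simp only [mem_up, mem_down, mem_level, mem_filter]
    constructor
    · rintro ⟨hxv, hxy⟩
      have := Γ.rank_covers x v hxv
      have := Γ.rank_covers x y hxy
      exact ⟨⟨hxv, hxy⟩, by omega⟩
    · exact fun h => h.1

theorem IsDifferential.card_up (hΓ : Γ.IsDifferential) (v : Γ.V) :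
    #(Γ.up v) = #(Γ.down v) + 1 := by
  simpa only [up, down, ← Set.ncard_coe_finset, Set.Finite.coe_toFinset] using hΓ.2 v

theorem IsDifferential.card_filter_up (hΓ : Γ.IsDifferential) {y v : Γ.V} (hne : y ≠ v)
    (hr : Γ.rank y = Γ.rank v) :
    #{w ∈ Γ.up v | Γ.covers y w} = #{x ∈ Γ.down v | Γ.covers x y} := by
  have h := hΓ.1 y v hne hr
  rw [← Set.ncard_coe_finset, ← Set.ncard_coe_finset]
  convert h.symm using 2 <;> ext <;> simp [and_comm]

theorem IsDifferential.sum_up_sum_down (hΓ : Γ.IsDifferential) {M : Type*} [AddCommMonoid M]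
    (f : Γ.V → M) (v : Γ.V) :
    ∑ w ∈ Γ.up v, ∑ y ∈ Γ.down w, f y = f v + ∑ x ∈ Γ.down v, ∑ y ∈ Γ.up x, f y := by
  have hv : v ∈ Γ.level (Γ.rank v) := mem_level.2 rfl
  rw [sum_up_sum_down_eq_sum_level, sum_down_sum_up_eq_sum_level, ← add_sum_erase _ _ hv,
    ← add_sum_erase _ _ hv, ← add_assoc]
  congr 1
  · rw [filter_true_of_mem fun w hw => mem_up.1 hw, filter_true_of_mem fun x hx => mem_down.1 hx,
      hΓ.card_up, add_smul, one_smul, add_comm]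
  · refine sum_congr rfl fun y hy => ?_
    rw [hΓ.card_filter_up (ne_of_mem_erase hy) (mem_level.1 (mem_of_mem_erase hy))]

theorem sum_up_d_of_rank_lt {u v : Γ.V} (h : Γ.rank v < Γ.rank u) :
    ∑ w ∈ Γ.up v, Γ.d u w = ∑ x ∈ Γ.down u, Γ.d x v := by
  by_cases hvu : Γ.covers v u
  · rw [sum_eq_single_of_mem u (mem_up.2 hvu), sum_eq_single_of_mem v (mem_down.2 hvu), d_self,
      d_self]
    · intro x hx hxv
      have := Γ.rank_covers x u (mem_down.1 hx)
      exact d_eq_zero_of_rank_le hxv (by omega)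
    · intro w hw hwu
      have := Γ.rank_covers v w (mem_up.1 hw)
      exact d_eq_zero_of_rank_le (Ne.symm hwu) (by omega)
  · rw [sum_eq_zero, sum_eq_zero]
    · intro x hx
      have := Γ.rank_covers x u (mem_down.1 hx)
      exact d_eq_zero_of_rank_le (by rintro rfl; exact hvu (mem_down.1 hx)) (by omega)
    · intro w hw
      have := Γ.rank_covers v w (mem_up.1 hw)
      exact d_eq_zero_of_rank_le (by rintro rfl; exact hvu (mem_up.1 hw)) (by omega)

theorem IsDifferential.sum_up_d (hΓ : Γ.IsDifferential) (u v : Γ.V) :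
    ∑ w ∈ Γ.up v, Γ.d u w = ∑ x ∈ Γ.down u, Γ.d x v + (Γ.rank v + 1 - Γ.rank u) * Γ.d u v := by
  induction hn : Γ.rank v using Nat.strong_induction_on generalizing v with
  | _ n ih =>
  subst hn
  obtain h | h := lt_or_ge (Γ.rank v) (Γ.rank u)
  · rw [sum_up_d_of_rank_lt h, Nat.sub_eq_zero_of_le h, zero_mul, add_zero]
  have hdown : ∀ x ∈ Γ.down v, Γ.rank x + 1 = Γ.rank v := fun x hx =>
    (Γ.rank_covers x v (mem_down.1 hx)).symm
  have hswap : ∑ x ∈ Γ.down v, ∑ x' ∈ Γ.down u, Γ.d x' x = ∑ x' ∈ Γ.down u, Γ.d x' v := by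
    rw [sum_comm]
    refine sum_congr rfl fun x' hx' => (d_eq_sum_down ?_).symm
    have := Γ.rank_covers x' u (mem_down.1 hx')
    rintro rfl
    omega
  have hlast : (Γ.rank v - Γ.rank u) * ∑ x ∈ Γ.down v, Γ.d u x =
      (Γ.rank v - Γ.rank u) * Γ.d u v := by
    obtain rfl | huv := eq_or_ne u v
    · simp
    · rw [← d_eq_sum_down huv]
  calc ∑ w ∈ Γ.up v, Γ.d u w = ∑ w ∈ Γ.up v, ∑ y ∈ Γ.down w, Γ.d u y := by
        refine sum_congr rfl fun w hw => d_eq_sum_down ?_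
        have := Γ.rank_covers v w (mem_up.1 hw)
        rintro rfl
        omega
    _ = Γ.d u v + ∑ x ∈ Γ.down v, ∑ y ∈ Γ.up x, Γ.d u y := hΓ.sum_up_sum_down _ v
    _ = Γ.d u v + ∑ x ∈ Γ.down v,
          (∑ x' ∈ Γ.down u, Γ.d x' x + (Γ.rank v - Γ.rank u) * Γ.d u x) := by
        congr 1
        refine sum_congr rfl fun x hx => ?_
        rw [ih _ (by have := hdown x hx; omega) x rfl, hdown x hx]
    _ = ∑ x' ∈ Γ.down u, Γ.d x' v + (Γ.rank v + 1 - Γ.rank u) * Γ.d u v := by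
        rw [sum_add_distrib, hswap, ← mul_sum, hlast, Nat.sub_add_comm h]
        ring

end Differential

variable (Γ) in
def IsHarmonic (φ : Γ.V → ℝ) : Prop := ∀ u, φ u = ∑ᶠ w ∈ {w | Γ.covers u w}, φ w

theorem isHarmonic_iff {φ : Γ.V → ℝ} : Γ.IsHarmonic φ ↔ ∀ u, φ u = ∑ w ∈ Γ.up u, φ w := by
  simp only [IsHarmonic, finsum_mem_covers_right]

theorem IsHarmonic.sum_level_succ_mul_sum_down {φ : Γ.V → ℝ} (hφ : Γ.IsHarmonic φ)
    (g : Γ.V → ℝ) (j : ℕ) :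
    ∑ u ∈ Γ.level (j + 1), φ u * ∑ x ∈ Γ.down u, g x = ∑ x ∈ Γ.level j, φ x * g x := by
  simp_rw [mul_sum]
  rw [sum_comm' (t' := Γ.level j) (s' := Γ.up)]
  · exact sum_congr rfl fun x _ => by rw [← sum_mul, ← isHarmonic_iff.1 hφ]
  · intro u x
    simp only [mem_up, mem_down, mem_level]
    constructor
    · rintro ⟨hu, hxu⟩
      have := Γ.rank_covers x u hxu
      exact ⟨hxu, by omega⟩
    · rintro ⟨hxu, hx⟩
      exact ⟨by rw [Γ.rank_covers x u hxu, hx], hxu⟩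

variable (Γ) in
/-- The paper's `S_k(v, φ)`. -/
noncomputable def levelSum (φ : Γ.V → ℝ) (k : ℕ) (v : Γ.V) : ℝ :=
  ∑ u ∈ Γ.level k, φ u * Γ.d u v

theorem levelSum_nonneg {φ : Γ.V → ℝ} (hφ : ∀ v, 0 ≤ φ v) (k : ℕ) (v : Γ.V) :
    0 ≤ Γ.levelSum φ k v :=
  sum_nonneg fun u _ => mul_nonneg (hφ u) (Nat.cast_nonneg _)

theorem IsDifferential.sum_up_levelSum (hΓ : Γ.IsDifferential) (φ : Γ.V → ℝ) (k : ℕ)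
    (v : Γ.V) :
    ∑ w ∈ Γ.up v, Γ.levelSum φ k w =
      ∑ u ∈ Γ.level k, φ u * ∑ x ∈ Γ.down u, (Γ.d x v : ℝ) +
        (Γ.rank v + 1 - k : ℕ) * Γ.levelSum φ k v := by
  unfold levelSum
  rw [sum_comm, mul_sum, ← sum_add_distrib]
  refine sum_congr rfl fun u hu => ?_
  rw [← mul_sum, ← Nat.cast_sum, hΓ.sum_up_d, mem_level.1 hu]
  push_cast
  ring

theorem IsDifferential.sum_up_levelSum_zero (hΓ : Γ.IsDifferential) (φ : Γ.V → ℝ) (v : Γ.V) :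
    ∑ w ∈ Γ.up v, Γ.levelSum φ 0 w = (Γ.rank v + 1 : ℕ) * Γ.levelSum φ 0 v := by
  rw [hΓ.sum_up_levelSum, Nat.sub_zero, sum_eq_zero fun u hu => by
    rw [down_eq_empty_of_rank_eq_zero (mem_level.1 hu), sum_empty, mul_zero], zero_add]

theorem IsDifferential.sum_up_levelSum_succ (hΓ : Γ.IsDifferential) {φ : Γ.V → ℝ}
    (hφ : Γ.IsHarmonic φ) (k : ℕ) (v : Γ.V) :
    ∑ w ∈ Γ.up v, Γ.levelSum φ (k + 1) w =
      Γ.levelSum φ k v + (Γ.rank v - k : ℕ) * Γ.levelSum φ (k + 1) v := by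
  rw [hΓ.sum_up_levelSum, hφ.sum_level_succ_mul_sum_down, Nat.add_sub_add_right]
  rfl

noncomputable def contractCoeff (τ : ℝ) (n k : ℕ) : ℝ :=
  τ ^ k * (1 - τ) ^ (n - k) / (n - k).factorial

theorem contractCoeff_nonneg {τ : ℝ} (hτ0 : 0 ≤ τ) (hτ1 : τ ≤ 1) (n k : ℕ) :
    0 ≤ contractCoeff τ n k := by
  unfold contractCoeff
  have : 0 ≤ 1 - τ := by linarith
  positivity

theorem contractCoeff_succ_succ_add_mul (τ : ℝ) {n k : ℕ} (hk : k ≤ n) :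
    contractCoeff τ (n + 1) (k + 1) + (n + 1 - k : ℕ) * contractCoeff τ (n + 1) k =
      contractCoeff τ n k := by
  obtain ⟨m, rfl⟩ := Nat.exists_eq_add_of_le hk
  simp only [contractCoeff, Nat.add_sub_add_right, Nat.add_sub_cancel_left,
    show k + m + 1 - k = m + 1 by omega, Nat.factorial_succ]
  push_cast
  field_simp
  ring

theorem sum_range_contractCoeff_succ (τ : ℝ) (n : ℕ) (S T : ℕ → ℝ)
    (h0 : T 0 = (n + 1 : ℕ) * S 0) (hsucc : ∀ k, T (k + 1) = S k + (n - k : ℕ) * S (k + 1)) :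
    ∑ k ∈ range (n + 2), contractCoeff τ (n + 1) k * T k =
      ∑ k ∈ range (n + 1), contractCoeff τ n k * S k := by
  have hsplit : ∑ k ∈ range (n + 1), contractCoeff τ n k * S k =
      ∑ k ∈ range (n + 1), contractCoeff τ (n + 1) (k + 1) * S k +
        ∑ k ∈ range (n + 1), contractCoeff τ (n + 1) k * ((n + 1 - k : ℕ) * S k) := by
    rw [← sum_add_distrib]
    refine sum_congr rfl fun k hk => ?_
    rw [← contractCoeff_succ_succ_add_mul τ (Nat.lt_succ_iff.1 (mem_range.1 hk))]
    ring
  rw [hsplit, sum_range_succ', h0,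
    sum_range_succ' (fun k => contractCoeff τ (n + 1) k * ((n + 1 - k : ℕ) * S k))]
  simp only [hsucc, mul_add, sum_add_distrib]
  rw [sum_range_succ (fun k => contractCoeff τ (n + 1) (k + 1) * ((n - k : ℕ) * S (k + 1)))]
  simp only [Nat.sub_self, Nat.add_sub_add_right, Nat.sub_zero, Nat.cast_zero, zero_mul,
    mul_zero, add_zero]
  ring

theorem contract_eq_sum_levelSum (τ : ℝ) (φ : Γ.V → ℝ) (v : Γ.V) :
    Γ.contract τ φ v =
      ∑ k ∈ range (Γ.rank v + 1), contractCoeff τ (Γ.rank v) k * Γ.levelSum φ k v := by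
  refine sum_congr rfl fun k _ => ?_
  rw [finsum_mem_eq_finite_toFinset_sum _ (Γ.finite_level k)]
  rfl

theorem IsDifferential.isHarmonic_contract (hΓ : Γ.IsDifferential) {φ : Γ.V → ℝ}
    (hφ : Γ.IsHarmonic φ) (τ : ℝ) : Γ.IsHarmonic (Γ.contract τ φ) := by
  refine isHarmonic_iff.2 fun v => ?_
  have hup : ∀ w ∈ Γ.up v, Γ.rank w = Γ.rank v + 1 := fun w hw => Γ.rank_covers v w (mem_up.1 hw)
  rw [sum_congr rfl fun w hw => by rw [contract_eq_sum_levelSum, hup w hw], sum_comm,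
    contract_eq_sum_levelSum]
  simp_rw [← mul_sum]
  exact (sum_range_contractCoeff_succ τ _ _ _ (hΓ.sum_up_levelSum_zero φ v)
    (hΓ.sum_up_levelSum_succ hφ · v)).symm

theorem contract_bot {φ : Γ.V → ℝ} (τ : ℝ) : Γ.contract τ φ Γ.bot = φ Γ.bot := by
  simp [contract_eq_sum_levelSum, Γ.rank_bot, levelSum, level_zero, contractCoeff]

end BranchingDiagram

/-- If `φ` is a non-negative normalized harmonic function on a `1`-differential
poset and `0 ≤ τ ≤ 1`, then `C_τ(φ)` is a non-negative normalized harmonic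
function. -/
theorem stmt_12 (Γ : BranchingDiagram) (hΓ : Γ.IsDifferential) (φ : Γ.V → ℝ)
    (hpos : ∀ v, 0 ≤ φ v) (hnorm : φ Γ.bot = 1)
    (hharm : ∀ u, φ u = ∑ᶠ w ∈ {w | Γ.covers u w}, φ w)
    (τ : ℝ) (hτ0 : 0 ≤ τ) (hτ1 : τ ≤ 1) :
    (∀ v, 0 ≤ Γ.contract τ φ v) ∧ Γ.contract τ φ Γ.bot = 1 ∧
    (∀ u, Γ.contract τ φ u = ∑ᶠ w ∈ {w | Γ.covers u w}, Γ.contract τ φ w) := by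
  refine ⟨fun v => ?_, by rw [Γ.contract_bot, hnorm], hΓ.isHarmonic_contract hharm τ⟩
  rw [Γ.contract_eq_sum_levelSum]
  exact sum_nonneg fun k _ =>
    mul_nonneg (BranchingDiagram.contractCoeff_nonneg hτ0 hτ1 _ k) (Γ.levelSum_nonneg hpos k v)
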